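/- arXiv:1810.05390 — 2 statements merged into one kernel-verified Lean document; each statement's English description precedes it below -/
import Mathlib

section
/- Let (X, μ1, μ2) be a generalized bitopological space and let i, j ∈ {1,2} with i ≠ j. A set A ⊆ X is μi-closed if and only if A is both g_{μi}-closed with respect to μj and λ_{μi}-closed with respect to μj. -/
open Set

/-- A generalized topology on `X`: contains `∅` and is closed under arbitrary unions. -/
def IsGenTop {X : Type*} (μ : Set (Set X)) : Prop :=
  ∅ ∈ μ ∧ ∀ S ⊆ μ, ⋃₀ S ∈ μ

/-- `A` is μ-closed iff its complement is μ-open. -/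
def gClosedSet {X : Type*} (μ : Set (Set X)) (A : Set X) : Prop := Aᶜ ∈ μ

/-- μ-closure: intersection of all μ-closed sets containing `A`. -/
def gCl {X : Type*} (μ : Set (Set X)) (A : Set X) : Set X :=
  ⋂₀ {F | gClosedSet μ F ∧ A ⊆ F}

/-- `A^∧_μ`: intersection of all μ-open sets containing `A`. -/
def wedgeOp {X : Type*} (μ : Set (Set X)) (A : Set X) : Set X :=
  ⋂₀ {U | U ∈ μ ∧ A ⊆ U}

/-- `A^∨_μ`: union of all μ-closed sets contained in `A`. -/
def veeOp {X : Type*} (μ : Set (Set X)) (A : Set X) : Set X :=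
  ⋃₀ {F | gClosedSet μ F ∧ F ⊆ A}

/-- `L` is a `∧_μ`-set. -/
def IsWedgeSet {X : Type*} (μ : Set (Set X)) (L : Set X) : Prop := L = wedgeOp μ L

/-- `M` is a `∨_μ`-set. -/
def IsVeeSet {X : Type*} (μ : Set (Set X)) (M : Set X) : Prop := M = veeOp μ M

/-- `A` is `g_{μi}`-closed with respect to `μj`. -/
def GClosedWrt {X : Type*} (μi μj : Set (Set X)) (A : Set X) : Prop :=
  ∀ U ∈ μj, A ⊆ U → gCl μi A ⊆ U

/-- `A` is `g_{μi}`-open with respect to `μj`. -/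
def GOpenWrt {X : Type*} (μi μj : Set (Set X)) (A : Set X) : Prop :=
  GClosedWrt μi μj Aᶜ

/-- `A` is `λ_{μi}`-closed with respect to `μj`. -/
def LamClosedWrt {X : Type*} (μi μj : Set (Set X)) (A : Set X) : Prop :=
  ∃ F L : Set X, gClosedSet μi F ∧ IsWedgeSet μj L ∧ A = F ∩ L

/-- `A` is `λ_{μi}`-open with respect to `μj`. -/
def LamOpenWrt {X : Type*} (μi μj : Set (Set X)) (A : Set X) : Prop :=
  LamClosedWrt μi μj Aᶜ

/-- `A` is pairwise `λ`-closed. -/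
def PairwiseLamClosed {X : Type*} (μ1 μ2 : Set (Set X)) (A : Set X) : Prop :=
  ∃ F1 F2 L1 L2 : Set X, gClosedSet μ1 F1 ∧ gClosedSet μ2 F2 ∧
    IsWedgeSet μ1 L1 ∧ IsWedgeSet μ2 L2 ∧ A = (F1 ∩ F2) ∩ (L1 ∩ L2)

def PairwiseT0 {X : Type*} (μ1 μ2 : Set (Set X)) : Prop :=
  ∀ x y : X, x ≠ y →
    (∃ U ∈ μ1, x ∈ U ∧ y ∉ U) ∨ (∃ V ∈ μ2, y ∈ V ∧ x ∉ V)

def PairwiseT1 {X : Type*} (μ1 μ2 : Set (Set X)) : Prop :=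
  ∀ x y : X, x ≠ y →
    (∃ U ∈ μ1, x ∈ U ∧ y ∉ U) ∧ (∃ V ∈ μ2, y ∈ V ∧ x ∉ V)

def PairwiseSymmetric {X : Type*} (μ1 μ2 : Set (Set X)) : Prop :=
  ∀ x y : X, (x ∈ gCl μ1 {y} → y ∈ gCl μ2 {x}) ∧ (x ∈ gCl μ2 {y} → y ∈ gCl μ1 {x})

def PairwiseTHalf {X : Type*} (μ1 μ2 : Set (Set X)) : Prop :=
  (∀ A : Set X, GClosedWrt μ1 μ2 A → gClosedSet μ1 A) ∧
  (∀ A : Set X, GClosedWrt μ2 μ1 A → gClosedSet μ2 A)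

def PairwiseR0 {X : Type*} (μ1 μ2 : Set (Set X)) : Prop :=
  (∀ G ∈ μ1, ∀ x ∈ G, gCl μ2 {x} ⊆ G) ∧ (∀ G ∈ μ2, ∀ x ∈ G, gCl μ1 {x} ⊆ G)

def PairwiseLamSymmetric {X : Type*} (μ1 μ2 : Set (Set X)) : Prop :=
  ∀ A : Set X, PairwiseLamClosed μ1 μ2 A →
    LamClosedWrt μ1 μ2 A ∧ LamClosedWrt μ2 μ1 A

/-- `A` and `B` are μ-weakly separated. -/
def MuWeaklySeparated {X : Type*} (μ : Set (Set X)) (A B : Set X) : Prop :=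
  ∃ U ∈ μ, ∃ V ∈ μ, A ⊆ U ∧ B ⊆ V ∧ A ∩ V = ∅ ∧ B ∩ U = ∅

def PairwiseTQuarter {X : Type*} (μ1 μ2 : Set (Set X)) : Prop :=
  ∀ P : Set X, P.Finite → ∀ y ∉ P,
    ∃ A : Set X, P ⊆ A ∧ y ∉ A ∧
      (A ∈ μ1 ∨ A ∈ μ2 ∨ gClosedSet μ1 A ∨ gClosedSet μ2 A)

def PairwiseTThreeEighths {X : Type*} (μ1 μ2 : Set (Set X)) : Prop :=
  ∀ P : Set X, P.Countable → ∀ y ∉ P,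
    ∃ A : Set X, P ⊆ A ∧ y ∉ A ∧
      (A ∈ μ1 ∨ A ∈ μ2 ∨ gClosedSet μ1 A ∨ gClosedSet μ2 A)

def PairwiseTFiveEighths {X : Type*} (μ1 μ2 : Set (Set X)) : Prop :=
  ∀ P : Set X, ∀ y ∉ P,
    ∃ A : Set X, P ⊆ A ∧ y ∉ A ∧
      (A ∈ μ1 ∨ A ∈ μ2 ∨ gClosedSet μ1 A ∨ gClosedSet μ2 A)

section GenTop

variable {X : Type*} {μ ν : Set (Set X)} {A B F L : Set X}

theorem subset_gCl : A ⊆ gCl μ A :=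
  fun _ hx _ hF => hF.2 hx

theorem gCl_subset_of_gClosedSet (hF : gClosedSet μ F) (hAF : A ⊆ F) : gCl μ A ⊆ F :=
  sInter_subset_of_mem ⟨hF, hAF⟩

theorem gClosedSet_gCl (hμ : IsGenTop μ) (A : Set X) : gClosedSet μ (gCl μ A) := by
  unfold gClosedSet gCl
  rw [compl_sInter]
  exact hμ.2 _ (by rintro _ ⟨F, hF, rfl⟩; exact hF.1)

theorem gClosedSet_of_gCl_subset (hμ : IsGenTop μ) (h : gCl μ A ⊆ A) : gClosedSet μ A := by
  rw [← subset_antisymm h subset_gCl]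
  exact gClosedSet_gCl hμ A

theorem wedgeOp_mono (h : A ⊆ B) : wedgeOp μ A ⊆ wedgeOp μ B :=
  fun _ hx U hU => hx U ⟨hU.1, h.trans hU.2⟩

theorem isWedgeSet_univ : IsWedgeSet μ (univ : Set X) :=
  (eq_univ_of_univ_subset fun _ _ _ hU => hU.2 trivial).symm

theorem GClosedWrt.of_gClosedSet (hA : gClosedSet μ A) : GClosedWrt μ ν A :=
  fun _ _ hAU => (gCl_subset_of_gClosedSet hA subset_rfl).trans hAU

theorem LamClosedWrt.of_gClosedSet (hA : gClosedSet μ A) : LamClosedWrt μ ν A :=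
  ⟨A, univ, hA, isWedgeSet_univ, (inter_univ A).symm⟩

theorem GClosedWrt.gCl_subset_wedgeOp (hA : GClosedWrt μ ν A) : gCl μ A ⊆ wedgeOp ν A :=
  fun _ hx U hU => hA U hU.1 hU.2 hx

theorem GClosedWrt.gClosedSet_of_lamClosedWrt (hμ : IsGenTop μ) (hg : GClosedWrt μ ν A)
    (hl : LamClosedWrt μ ν A) : gClosedSet μ A := by
  obtain ⟨F, L, hF, hL, rfl⟩ := hl
  refine gClosedSet_of_gCl_subset hμ (subset_inter ?_ ?_)
  · exact gCl_subset_of_gClosedSet hF inter_subset_left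
  · calc gCl μ (F ∩ L) ⊆ wedgeOp ν (F ∩ L) := hg.gCl_subset_wedgeOp
      _ ⊆ wedgeOp ν L := wedgeOp_mono inter_subset_right
      _ = L := hL.symm

end GenTop

theorem stmt12_general {X : Type*} (μ : Fin 2 → Set (Set X)) (hμ : ∀ k, IsGenTop (μ k))
    (i j : Fin 2) (A : Set X) :
    gClosedSet (μ i) A ↔
      (GClosedWrt (μ i) (μ j) A ∧ LamClosedWrt (μ i) (μ j) A) :=
  ⟨fun hA => ⟨.of_gClosedSet hA, .of_gClosedSet hA⟩,
    fun ⟨hg, hl⟩ => hg.gClosedSet_of_lamClosedWrt (hμ i) hl⟩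

theorem stmt12 {X : Type*} (μ : Fin 2 → Set (Set X)) (hμ : ∀ k, IsGenTop (μ k))
    (i j : Fin 2) (hij : i ≠ j) (A : Set X) :
    gClosedSet (μ i) A ↔
      (GClosedWrt (μ i) (μ j) A ∧ LamClosedWrt (μ i) (μ j) A) :=
  stmt12_general μ hμ i j A
end

section
/- If a generalized bitopological space (X, μ1, μ2) is pairwise T_{1/2}, then every subset of X is pairwise λ-closed. -/
open Set

/-! Under pairwise `T_{1/2}`, the complement of a point `x` is either `μ₂`-open or
`g_{μ₁}`-closed with respect to `μ₂` (the only `μ₂`-open sets containing `{x}ᶜ` are then `univ`),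
so every point is `μ₁`-open or `μ₂`-closed. Given `A`, each point outside `A` is therefore
`μ₁`-open, or has a `μ₁`-open or `μ₂`-open complement: the first kind is removed by a `μ₁`-closed
set, the other two by `∧_{μ₁}`- and `∧_{μ₂}`-sets. -/

section

variable {X : Type*} {μ : Set (Set X)}

lemma subset_wedgeOp (A : Set X) : A ⊆ wedgeOp μ A :=
  fun _ hx => mem_sInter.mpr fun _ hU => hU.2 hx

lemma isWedgeSet_of_forall_compl_singleton_mem {L : Set X} (hL : ∀ y ∉ L, {y}ᶜ ∈ μ) :
    IsWedgeSet μ L := by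
  refine (subset_wedgeOp L).antisymm fun z hz => ?_
  by_contra hzL
  have hLz : L ⊆ {z}ᶜ := fun y hy hyz => hzL (mem_singleton_iff.mp hyz ▸ hy)
  exact mem_sInter.mp hz _ ⟨hL z hzL, hLz⟩ rfl

lemma IsGenTop.mem_of_forall_singleton_mem (hμ : IsGenTop μ) {U : Set X}
    (hU : ∀ y ∈ U, {y} ∈ μ) : U ∈ μ := by
  have hunion : U = ⋃₀ ((fun y => {y}) '' U) := by rw [sUnion_image, biUnion_of_singleton]
  rw [hunion]
  exact hμ.2 _ (image_subset_iff.mpr hU)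

lemma IsGenTop.gClosedSet_univ (hμ : IsGenTop μ) : gClosedSet μ univ := by
  simpa [gClosedSet] using hμ.1

lemma gClosedWrt_compl_singleton {μi μj : Set (Set X)} {x : X} (hx : {x}ᶜ ∉ μj) :
    GClosedWrt μi μj {x}ᶜ := by
  intro U hU hxU
  rcases subset_singleton_iff_eq.mp (compl_subset_comm.mp hxU) with hU_univ | hU_eq
  · exact compl_empty_iff.mp hU_univ ▸ subset_univ _
  · rw [← compl_compl U, hU_eq] at hU
    exact absurd hU hx

lemma singleton_mem_or_compl_singleton_mem {μi μj : Set (Set X)}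
    (hT : ∀ A : Set X, GClosedWrt μi μj A → gClosedSet μi A) (x : X) :
    {x} ∈ μi ∨ {x}ᶜ ∈ μj := by
  by_cases hx : {x}ᶜ ∈ μj
  · exact Or.inr hx
  · left
    simpa [gClosedSet] using hT _ (gClosedWrt_compl_singleton hx)

end

theorem stmt14 {X : Type*} (μ1 μ2 : Set (Set X))
    (h1 : IsGenTop μ1) (h2 : IsGenTop μ2)
    (hhalf : PairwiseTHalf μ1 μ2) :
    ∀ A : Set X, PairwiseLamClosed μ1 μ2 A := by
  intro A
  refine ⟨{y | y ∉ A ∧ {y} ∈ μ1}ᶜ, univ, {y | y ∉ A ∧ {y}ᶜ ∈ μ1}ᶜ,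
    {y | y ∉ A ∧ {y}ᶜ ∈ μ2}ᶜ, ?_, h2.gClosedSet_univ, ?_, ?_, ?_⟩
  · rw [gClosedSet, compl_compl]
    exact h1.mem_of_forall_singleton_mem fun y hy => hy.2
  · exact isWedgeSet_of_forall_compl_singleton_mem fun y hy => (not_notMem.mp hy).2
  · exact isWedgeSet_of_forall_compl_singleton_mem fun y hy => (not_notMem.mp hy).2
  · ext y
    by_cases hyA : y ∈ A
    · simp [hyA]
    · have hy := singleton_mem_or_compl_singleton_mem hhalf.1 y
      simp only [mem_inter_iff, mem_compl_iff, mem_ofPred_eq, mem_univ, hyA, not_false_eq_true,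
        true_and, and_true, false_iff]
      tauto
end
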